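/- arXiv:1701.06555 — 2 statements merged into one kernel-verified Lean document; each statement's English description precedes it below -/
import Mathlib

section
/- Key equations (congruence case): in the interleaved Reed–Solomon decoding setup, for any positive integers s ≤ ℓ and any multi-index j ∈ ℕ^m with s ≤ |j| ≤ ℓ, one has the congruence Λ^s·f^j ≡ Σ_{i ⪯ j, |i| < s} [Λ^{s-|i|}·Ω^i]·[C(j,i)·R^{j-i}·G^{|i|}] (mod G^s), i.e., G^s divides the difference of the two sides. -/
open Polynomial Finset

/-!
Since `Λ ∣ G`, write `G = Λ * Λ'`; cancelling `Λ` in `Ω_t * G = Λ * (f_t - R_t)` gives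
`f_t = R_t + Λ' * Ω_t`. Expanding `Λ^s * f^j` by the multinomial theorem, the terms with
`|i| < s` are exactly the summands on the right, because `Λ^s * Λ'^|i| = Λ^(s-|i|) * G^|i|`,
while every term with `|i| ≥ s` contains `Λ^s * Λ'^s = G^s`.
-/

theorem Finset.prod_add_pow_eq_sum_Iic {ι A : Type*} [Fintype ι] [DecidableEq ι] [CommSemiring A]
    (a b : ι → A) (j : ι → ℕ) :
    ∏ t, (a t + b t) ^ j t =
      ∑ i ∈ Iic j, ((∏ t, (j t).choose (i t) : ℕ) : A) *
        (∏ t, a t ^ (j t - i t)) * ∏ t, b t ^ i t := by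
  have hIic : Iic j = Fintype.piFinset fun t => range (j t + 1) := by
    ext i
    simp [Fintype.mem_piFinset, Pi.le_def]
  simp_rw [add_comm (a _), add_pow, prod_univ_sum, hIic, Nat.cast_prod, ← prod_mul_distrib]
  exact sum_congr rfl fun i _ => prod_congr rfl fun t _ => by ring

theorem key_equation_congruence_of_eq_add_mul {ι A : Type*} [Fintype ι] [DecidableEq ι]
    [CommRing A] {Λ Λ' : A} {f R Ω : ι → A} (h : ∀ t, f t = R t + Λ' * Ω t) (s : ℕ)
    (j : ι → ℕ) :
    (Λ * Λ') ^ s ∣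
      Λ ^ s * ∏ t, f t ^ j t -
        ∑ i ∈ (Iic j).filter (fun i => ∑ t, i t < s),
          (Λ ^ (s - ∑ t, i t) * ∏ t, Ω t ^ i t) *
            (((∏ t, (j t).choose (i t) : ℕ) : A) *
              (∏ t, R t ^ (j t - i t)) * (Λ * Λ') ^ (∑ t, i t)) := by
  have hexp : Λ ^ s * ∏ t, f t ^ j t = ∑ i ∈ Iic j, Λ ^ s * Λ' ^ (∑ t, i t) *
      (((∏ t, (j t).choose (i t) : ℕ) : A) * (∏ t, R t ^ (j t - i t)) * ∏ t, Ω t ^ i t) := by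
    simp_rw [h, prod_add_pow_eq_sum_Iic, mul_sum, mul_pow, prod_mul_distrib, prod_pow_eq_pow_sum]
    exact sum_congr rfl fun i _ => by ring
  rw [hexp, ← sum_filter_add_sum_filter_not _ (fun i => ∑ t, i t < s)]
  have hlow : ∀ i ∈ (Iic j).filter (fun i => ∑ t, i t < s), Λ ^ s * Λ' ^ (∑ t, i t) *
      (((∏ t, (j t).choose (i t) : ℕ) : A) * (∏ t, R t ^ (j t - i t)) * ∏ t, Ω t ^ i t) =
      (Λ ^ (s - ∑ t, i t) * ∏ t, Ω t ^ i t) *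
        (((∏ t, (j t).choose (i t) : ℕ) : A) *
          (∏ t, R t ^ (j t - i t)) * (Λ * Λ') ^ (∑ t, i t)) := by
    intro i hi
    rw [← pow_sub_mul_pow Λ (mem_filter.1 hi).2.le]
    ring
  rw [sum_congr rfl hlow, add_sub_cancel_left]
  refine dvd_sum fun i hi => Dvd.dvd.mul_right ?_ _
  rw [mul_pow]
  exact mul_dvd_mul_left _ (pow_dvd_pow _ (not_lt.1 (mem_filter.1 hi).2))

theorem key_equation_congruence_general (F : Type*) [Field F]
    (n m : ℕ) (α : Fin n → F) (f : Fin m → Polynomial F) (E : Finset (Fin n))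
    (Λ : Polynomial F) (hΛ : Λ = ∏ i ∈ E, (X - C (α i)))
    (G : Polynomial F) (hG : G = ∏ i : Fin n, (X - C (α i)))
    (R : Fin m → Polynomial F)
    (Ω : Fin m → Polynomial F) (hΩ : ∀ t, Ω t * G = Λ * (f t - R t))
    (s : ℕ) (j : Fin m → ℕ) :
    G ^ s ∣
      (Λ ^ s * ∏ t, f t ^ j t -
        ∑ i ∈ (Finset.Iic j).filter (fun i => ∑ t, i t < s),
          (Λ ^ (s - ∑ t, i t) * ∏ t, Ω t ^ i t) *
            (((∏ t, (j t).choose (i t) : ℕ) : Polynomial F) *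
              (∏ t, R t ^ (j t - i t)) * G ^ (∑ t, i t))) := by
  have hΛ0 : Λ ≠ 0 := hΛ ▸ prod_ne_zero_iff.2 fun i _ => X_sub_C_ne_zero (α i)
  obtain ⟨Λ', rfl⟩ : Λ ∣ G := hΛ ▸ hG ▸ prod_dvd_prod_of_subset _ _ _ (subset_univ E)
  refine key_equation_congruence_of_eq_add_mul (fun t => ?_) s j
  have hcancel : Λ * (f t - R t) = Λ * (Λ' * Ω t) := by rw [← hΩ t]; ring
  linear_combination mul_left_cancel₀ hΛ0 hcancel

/-- Theorem 1 (key equations, congruence case) of the paper: in the interleaved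
Reed–Solomon decoding setup, for positive integers `s ≤ ℓ` and any multi-index
`j ∈ ℕ^m` with `s ≤ |j| ≤ ℓ`, one has
`Λ^s·f^j ≡ ∑_{i ⪯ j, |i| < s} [Λ^{s-|i|}·Ω^i]·[C(j,i)·R^{j-i}·G^{|i|}] (mod G^s)`. -/
theorem key_equation_congruence (F : Type*) [Field F] [Fintype F]
    (n k m : ℕ) (hk : k < n) (hm : 1 ≤ m)
    (α : Fin n → F) (hα : Function.Injective α)
    (f : Fin m → Polynomial F) (hf : ∀ t, (f t).degree < (k : ℕ))
    (e : Fin m → Fin n → F)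
    (E : Finset (Fin n)) (hE : ∀ i, i ∈ E ↔ ∃ t, e t i ≠ 0)
    (Λ : Polynomial F) (hΛ : Λ = ∏ i ∈ E, (X - C (α i)))
    (G : Polynomial F) (hG : G = ∏ i : Fin n, (X - C (α i)))
    (R : Fin m → Polynomial F) (hRdeg : ∀ t, (R t).degree < (n : ℕ))
    (hR : ∀ t i, (R t).eval (α i) = (f t).eval (α i) + e t i)
    (Ω : Fin m → Polynomial F) (hΩ : ∀ t, Ω t * G = Λ * (f t - R t))
    (s ℓ : ℕ) (hs : 0 < s) (hsℓ : s ≤ ℓ)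
    (j : Fin m → ℕ) (hjs : s ≤ ∑ t, j t) (hjℓ : ∑ t, j t ≤ ℓ) :
    G ^ s ∣
      (Λ ^ s * ∏ t, f t ^ j t -
        ∑ i ∈ (Finset.Iic j).filter (fun i => ∑ t, i t < s),
          (Λ ^ (s - ∑ t, i t) * ∏ t, Ω t ^ i t) *
            (((∏ t, (j t).choose (i t) : ℕ) : Polynomial F) *
              (∏ t, R t ^ (j t - i t)) * G ^ (∑ t, i t))) :=
  key_equation_congruence_general F n m α f E Λ hΛ G hG R Ω hΩ s j
end

section
/- For any integers n > k ≥ 2, m ≥ 1, and any real ε > 0, there exist positive integers s ≤ ℓ such that τ_new(ℓ,s) ≥ n·(1 - R^{m/(m+1)} - ε), where R := k/n and τ_new(ℓ,s) := n·[1 - (s·C(m+s-1,m) - m·C(m+s-1,m+1))/(s·C(m+ℓ,m))] - (m/(m+1))·(ℓ/s)·(k-1) - (1/s)·[1 - 1/C(m+ℓ,m)]. -/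
/-- The decoding radius `τ_new(ℓ,s)` of the Power-IRS decoder for code length `n`,
dimension `k`, interleaving degree `m` and decoder parameters `(ℓ, s)`. -/
noncomputable def tauNew (n k m ℓ s : ℕ) : ℝ :=
  (n : ℝ) * (1 - ((s : ℝ) * ((m + s - 1).choose m : ℝ) -
        (m : ℝ) * ((m + s - 1).choose (m + 1) : ℝ)) /
      ((s : ℝ) * ((m + ℓ).choose m : ℝ)))
    - ((m : ℝ) / ((m : ℝ) + 1)) * ((ℓ : ℝ) / (s : ℝ)) * ((k : ℝ) - 1)
    - (1 / (s : ℝ)) * (1 - 1 / ((m + ℓ).choose m : ℝ))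

/-! The binomial ratio `C(m+s-1,m) / C(m+ℓ,m)` is at most `((m+s-1)/(ℓ+1))^m`. Choosing
`ℓ = ⌈c s⌉` with `c = R^{-1/(m+1)}`, `τ_new(ℓ,s)` is therefore bounded below by a continuous
function of `1/s` whose value at `0` is at least `n (1 - R^{m/(m+1)})`, because
`c k = n R^{m/(m+1)}`. Letting `s → ∞` gives the claim. -/

open Filter Topology

lemma choose_mul_sub_choose_succ_eq {m s : ℕ} (hs : 1 ≤ s) :
    (s : ℝ) * ((m + s - 1).choose m : ℝ) - (m : ℝ) * ((m + s - 1).choose (m + 1) : ℝ)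
      = ((m + s - 1).choose m : ℝ) * ((s : ℝ) + m) / ((m : ℝ) + 1) := by
  have h := congrArg (Nat.cast : ℕ → ℝ) (Nat.choose_succ_right_eq (m + s - 1) m)
  rw [show m + s - 1 - m = s - 1 by omega] at h
  push_cast [Nat.cast_sub hs] at h
  rw [eq_div_iff (by positivity)]
  linear_combination (-(m : ℝ)) * h

lemma choose_div_choose_add_le (a b m : ℕ) :
    (a.choose m : ℝ) / ((b + m).choose m : ℝ) ≤ ((a : ℝ) / ((b : ℝ) + 1)) ^ m := by
  have hlow := Nat.pow_le_choose (α := ℝ) m (b + m)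
  rw [show b + m + 1 - m = b + 1 by omega] at hlow
  calc (a.choose m : ℝ) / ((b + m).choose m : ℝ)
      ≤ ((a : ℝ) ^ m / m.factorial) / (((b + 1 : ℕ) : ℝ) ^ m / m.factorial) :=
        div_le_div₀ (by positivity) (Nat.choose_le_pow_div m a) (by positivity) hlow
    _ = ((a : ℝ) / ((b : ℝ) + 1)) ^ m := by
        rw [div_pow]; field_simp; push_cast; ring

lemma tauNew_main_term_le {m s ℓ : ℕ} {c : ℝ} (hs : 1 ≤ s) (hc : 0 < c)
    (hcℓ : c * s ≤ ℓ) :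
    ((s : ℝ) * ((m + s - 1).choose m : ℝ) - (m : ℝ) * ((m + s - 1).choose (m + 1) : ℝ)) /
        ((s : ℝ) * ((m + ℓ).choose m : ℝ))
      ≤ (1 + m * (1 / (s : ℝ))) ^ (m + 1) / ((m + 1) * c ^ m) := by
  have hs0 : (0 : ℝ) < s := by exact_mod_cast hs
  have hratio : ((m + s - 1 : ℕ) : ℝ) / ((ℓ : ℝ) + 1) ≤ (1 + m * (1 / (s : ℝ))) / c := by
    have hscale : (1 + m * (1 / (s : ℝ))) * (c * s) = c * (s + m) := by field_simp
    rw [div_le_div_iff₀ (by positivity) hc, Nat.cast_sub (by omega)]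
    push_cast
    nlinarith [mul_le_mul_of_nonneg_left hcℓ (by positivity : (0 : ℝ) ≤ 1 + m * (1 / (s : ℝ)))]
  calc _ = ((m + s - 1).choose m : ℝ) / ((ℓ + m).choose m : ℝ)
          * ((1 + m * (1 / (s : ℝ))) / (m + 1)) := by
        rw [choose_mul_sub_choose_succ_eq hs, add_comm ℓ]
        field_simp
    _ ≤ ((1 + m * (1 / (s : ℝ))) / c) ^ m * ((1 + m * (1 / (s : ℝ))) / (m + 1)) := by
        gcongr
        exact (choose_div_choose_add_le _ _ _).trans (by gcongr)
    _ = _ := by rw [div_pow, pow_succ]; field_simp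

/-- For `c s ≤ ℓ ≤ c s + 1`, a lower bound for `tauNew n k m ℓ s` as a polynomial in `t = 1 / s`. -/
noncomputable def tauNewLowerBound (n k m : ℕ) (c t : ℝ) : ℝ :=
  n * (1 - (1 + m * t) ^ (m + 1) / ((m + 1) * c ^ m)) - m / (m + 1) * (c + t) * (k - 1) - t

lemma continuous_tauNewLowerBound (n k m : ℕ) (c : ℝ) :
    Continuous (tauNewLowerBound n k m c) := by
  unfold tauNewLowerBound; fun_prop

lemma tauNewLowerBound_le_tauNew {n k m s ℓ : ℕ} {c : ℝ} (hk : 1 ≤ k) (hs : 1 ≤ s) (hc : 0 < c)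
    (hcℓ : c * s ≤ ℓ) (hℓc : ℓ ≤ c * s + 1) :
    tauNewLowerBound n k m c (1 / s) ≤ tauNew n k m ℓ s := by
  have hs0 : (0 : ℝ) < s := by exact_mod_cast hs
  have hmain := mul_le_mul_of_nonneg_left (tauNew_main_term_le (m := m) hs hc hcℓ) n.cast_nonneg
  have hmid : (ℓ : ℝ) / s ≤ c + 1 / s := by
    rw [div_le_iff₀ hs0, add_mul, one_div_mul_cancel hs0.ne']; exact hℓc
  have hcoef : (0 : ℝ) ≤ m / (m + 1) * ((k : ℝ) - 1) := by
    have : (1 : ℝ) ≤ k := by exact_mod_cast hk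
    have : (0 : ℝ) ≤ m / (m + 1) := by positivity
    nlinarith
  have htail : 1 / (s : ℝ) * (1 - 1 / ((m + ℓ).choose m : ℝ)) ≤ 1 / s :=
    mul_le_of_le_one_right (by positivity) (sub_le_self _ (by positivity))
  unfold tauNew tauNewLowerBound
  nlinarith [mul_le_mul_of_nonneg_left hmid hcoef]

lemma exists_tauNewLowerBound_le_tauNew {n k m s : ℕ} {c : ℝ} (hk : 1 ≤ k) (hs : 1 ≤ s)
    (hc : 1 ≤ c) : ∃ ℓ, s ≤ ℓ ∧ tauNewLowerBound n k m c (1 / s) ≤ tauNew n k m ℓ s := by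
  have hcs : 0 ≤ c * s := by positivity
  refine ⟨⌈c * s⌉₊, ?_, tauNewLowerBound_le_tauNew hk hs (by positivity) (Nat.le_ceil _)
    (Nat.ceil_lt_add_one hcs).le⟩
  exact_mod_cast (le_mul_of_one_le_left s.cast_nonneg hc).trans (Nat.le_ceil (c * s))

lemma tauNewLowerBound_zero_ge {n k m : ℕ} {d : ℝ} (hd : 0 < d) (hdk : n * d ^ (m + 1) = k) :
    n * (1 - d ^ m) ≤ tauNewLowerBound n k m d⁻¹ 0 := by
  have hkd : (k : ℝ) * d⁻¹ = n * d ^ m := by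
    rw [← hdk, pow_succ]; field_simp
  have hcoef : (0 : ℝ) ≤ m / (m + 1) * d⁻¹ := by positivity
  unfold tauNewLowerBound
  rw [inv_pow, mul_zero, add_zero, one_pow, add_zero, sub_zero]
  have hsplit : (n : ℝ) * (1 - d ^ m) = n * (1 - 1 / ((m + 1) * (d ^ m)⁻¹))
      - m / (m + 1) * (k * d⁻¹) := by
    rw [hkd]; field_simp; ring
  rw [hsplit]
  nlinarith

lemma rpow_one_div_succ_pow {R : ℝ} (hR : 0 ≤ R) (m j : ℕ) :
    (R ^ (1 / ((m : ℝ) + 1))) ^ j = R ^ ((j : ℝ) / ((m : ℝ) + 1)) := by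
  rw [← Real.rpow_natCast, ← Real.rpow_mul hR, one_div_mul_eq_div]

theorem decoding_radius_eps_close_to_limit_general (n k m : ℕ) (hk : 2 ≤ k) (hkn : k < n)
    (ε : ℝ) (hε : 0 < ε) :
    ∃ s ℓ : ℕ, 0 < s ∧ s ≤ ℓ ∧
      tauNew n k m ℓ s ≥
        (n : ℝ) * (1 - ((k : ℝ) / (n : ℝ)) ^ ((m : ℝ) / ((m : ℝ) + 1)) - ε) := by
  have hn : (0 : ℝ) < n := by exact_mod_cast (Nat.zero_le k).trans_lt hkn
  have hR : (0 : ℝ) < k / n := div_pos (by exact_mod_cast (by omega : 0 < k)) hn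
  set d := ((k : ℝ) / n) ^ (1 / ((m : ℝ) + 1)) with hd_def
  have hd : 0 < d := Real.rpow_pos_of_pos hR _
  have hd1 : d ≤ 1 := Real.rpow_le_one hR.le
    ((div_le_one hn).mpr (by exact_mod_cast hkn.le)) (by positivity)
  have hdk : n * d ^ (m + 1) = k := by
    rw [hd_def, rpow_one_div_succ_pow hR.le, Nat.cast_succ, div_self (by positivity),
      Real.rpow_one, mul_div_cancel₀ _ hn.ne']
  have hgap : n * (1 - ((k : ℝ) / n) ^ ((m : ℝ) / ((m : ℝ) + 1)) - ε)
      < tauNewLowerBound n k m d⁻¹ 0 := by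
    rw [← rpow_one_div_succ_pow hR.le]
    nlinarith [tauNewLowerBound_zero_ge hd hdk]
  have hlim : Tendsto (fun s : ℕ => tauNewLowerBound n k m d⁻¹ (1 / s)) atTop
      (𝓝 (tauNewLowerBound n k m d⁻¹ 0)) :=
    ((continuous_tauNewLowerBound n k m d⁻¹).tendsto 0).comp tendsto_one_div_atTop_nhds_zero_nat
  obtain ⟨s, hs, hs1⟩ := ((hlim.eventually (lt_mem_nhds hgap)).and (eventually_ge_atTop 1)).exists
  obtain ⟨ℓ, hsℓ, hℓ⟩ :=
    exists_tauNewLowerBound_le_tauNew (by omega : 1 ≤ k) hs1 (one_le_inv_iff₀.mpr ⟨hd, hd1⟩)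
  exact ⟨s, ℓ, hs1, hsℓ, (hs.trans_le hℓ).le⟩

/-- Corollary 1 of the paper: for any `ε > 0` there are decoder parameters
`s ≤ ℓ` with `τ_new(ℓ,s) ≥ n(1 - R^{m/(m+1)} - ε)`, where `R = k/n`. -/
theorem decoding_radius_eps_close_to_limit (n k m : ℕ) (hk : 2 ≤ k) (hkn : k < n)
    (hm : 1 ≤ m) (ε : ℝ) (hε : 0 < ε) :
    ∃ s ℓ : ℕ, 0 < s ∧ s ≤ ℓ ∧
      tauNew n k m ℓ s ≥
        (n : ℝ) * (1 - ((k : ℝ) / (n : ℝ)) ^ ((m : ℝ) / ((m : ℝ) + 1)) - ε) :=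
  decoding_radius_eps_close_to_limit_general n k m hk hkn ε hε
end
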